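/- For every s̄ ∈ (ℂ×)^[n], every k ∈ ℕ, and every μ ∈ ℂ, the element F_k^μ(s̄) belongs to A⁰_{kδ}; that is, F_k^μ(s̄) ∈ S_{kδ,0} and the limit lim_{ξ→∞} (F_k^μ(s̄))^{l̄}_ξ exists for every l̄ with 0 ≤ l̄ ≤ kδ. -/

import Mathlib

open Filter Topology

noncomputable section

/-- An assignment of complex values to the variables `x i j` (`i`-th group, `j`-th variable,
both 0-indexed). -/
abbrev Va : Type := ℕ → ℕ → ℂ

/-- cyclic successor mod `n` -/
def cyc (n i : ℕ) : ℕ := (i + 1) % n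

/-- cyclic predecessor mod `n` -/
def cycP (n i : ℕ) : ℕ := (i + n - 1) % n

/-- the matrix of rational functions `ω_{i,i'}(z)` -/
def omg (n : ℕ) (q d : ℂ) (i i' : ℕ) (z : ℂ) : ℂ :=
  if i' = i then (z - (q ^ 2)⁻¹) / (z - 1)
  else if i' = cyc n i then (d⁻¹ * z - q) / (z - 1)
  else if i = cyc n i' then (z - q * d⁻¹) / (z - 1)
  else 1

/-- the assignment `v` with the first `m i` variables of each group `i < n` permuted by `σ i` -/
def permAssign (n : ℕ) (m : ℕ → ℕ) (σ : ∀ i : Fin n, Equiv.Perm (Fin (m i.1))) (v : Va) : Va :=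
  fun i j =>
    if h : i < n then
      if h2 : j < m i then v i ((σ ⟨i, h⟩) ⟨j, h2⟩).1 else v i j
    else v i j

/-- the star (shuffle) product of `F` of degree `k` with `G` of degree `l` -/
def starD (n : ℕ) (q d : ℂ) (k l : ℕ → ℕ) (F G : Va → ℂ) : Va → ℂ :=
  fun v =>
    ∑ σ : ∀ i : Fin n, Equiv.Perm (Fin (k i.1 + l i.1)),
      (fun w : Va =>
          F w * G (fun i j => w i (j + k i)) *
            ∏ i : Fin n, ∏ i' : Fin n, ∏ j : Fin (k i.1), ∏ j' : Fin (l i'.1),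
              omg n q d i.1 i'.1 (w i.1 j.1 / w i'.1 (k i'.1 + j'.1)))
        (permAssign n (fun i => k i + l i) σ v)

/-- generic assignments for the degree vector `k`: all relevant coordinates are nonzero and
pairwise distinct (so that all our rational expressions are pole-free) -/
def Dom (n : ℕ) (k : ℕ → ℕ) : Set Va :=
  {v | (∀ i, i < n → ∀ j, j < k i → v i j ≠ 0) ∧
    ∀ i i' j j', i < n → i' < n → j < k i → j' < k i' → (i, j) ≠ (i', j') → v i j ≠ v i' j'}

/-- generic assignments with no bound on the number of variables in each group -/
def DomAll (n : ℕ) : Set Va :=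
  {v | (∀ i, i < n → ∀ j, v i j ≠ 0) ∧
    ∀ i i' j j', i < n → i' < n → (i, j) ≠ (i', j') → v i j ≠ v i' j'}

/-- `F` only depends on the variables `x i j` with `i < n`, `j < k i` -/
def VaDependsOn (n : ℕ) (k : ℕ → ℕ) (F : Va → ℂ) : Prop :=
  ∀ v w : Va, (∀ i, i < n → ∀ j, j < k i → v i j = w i j) → F v = F w

/-- `F` is symmetric in the variables of each group -/
def SymmIn (n : ℕ) (k : ℕ → ℕ) (F : Va → ℂ) : Prop :=
  ∀ v : Va, ∀ i₀, i₀ < n → ∀ σ : Equiv.Perm ℕ, (∀ j, k i₀ ≤ j → σ j = j) →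
    F (fun i j => if i = i₀ then v i (σ j) else v i j) = F v

/-- the denominator `∏_{i ∈ [n]} ∏_{j ≤ k_i, j' ≤ k_{i+1}} (x_{i,j} - x_{i+1,j'})` -/
def poleDenom (n : ℕ) (k : ℕ → ℕ) (v : Va) : ℂ :=
  ∏ i : Fin n, ∏ j : Fin (k i.1), ∏ j' : Fin (k (cyc n i.1)), (v i.1 j.1 - v (cyc n i.1) j'.1)

/-- the pole conditions: `F = f / poleDenom` with `f` a (Laurent) polynomial,
written as `f₀ / (∏ x_{i,j})^N` with `f₀` an honest polynomial -/
def PoleCond (n : ℕ) (k : ℕ → ℕ) (F : Va → ℂ) : Prop :=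
  ∃ (f : MvPolynomial (ℕ × ℕ) ℂ) (N : ℕ),
    ∀ v ∈ Dom n k,
      F v * poleDenom n k v * (∏ i : Fin n, ∏ j : Fin (k i.1), v i.1 j.1) ^ N =
        MvPolynomial.eval (fun p : ℕ × ℕ => v p.1 p.2) f

/-- the wheel conditions: `F` vanishes whenever `x_{i,j₁}/x_{i+ε,l} = q d^ε` and
`x_{i+ε,l}/x_{i,j₂} = q d^{-ε}` for some `ε ∈ {±1}` -/
def WheelCond (n : ℕ) (q d : ℂ) (k : ℕ → ℕ) (F : Va → ℂ) : Prop :=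
  ∀ v ∈ Dom n k, ∀ i, i < n →
    ((∀ j₁ j₂ l, j₁ < k i → j₂ < k i → l < k (cyc n i) →
        v i j₁ = q * d * v (cyc n i) l → v (cyc n i) l = q * d⁻¹ * v i j₂ → F v = 0) ∧
     (∀ j₁ j₂ l, j₁ < k i → j₂ < k i → l < k (cycP n i) →
        v i j₁ = q * d⁻¹ * v (cycP n i) l → v (cycP n i) l = q * d * v i j₂ → F v = 0))

/-- `F` has total degree `0` -/
def Deg0 (n : ℕ) (k : ℕ → ℕ) (F : Va → ℂ) : Prop :=
  ∀ v ∈ Dom n k, ∀ ξ : ℂ, ξ ≠ 0 → F (fun i j => ξ * v i j) = F v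

/-- membership in `S_{k̄}`: the big shuffle algebra -/
def SK (n : ℕ) (q d : ℂ) (k : ℕ → ℕ) (F : Va → ℂ) : Prop :=
  VaDependsOn n k F ∧ SymmIn n k F ∧ PoleCond n k F ∧ WheelCond n q d k F

/-- membership in `S_{k̄,0}` -/
def SK0 (n : ℕ) (q d : ℂ) (k : ℕ → ℕ) (F : Va → ℂ) : Prop :=
  SK n q d k F ∧ Deg0 n k F

/-- multiply by `ξ` the first `l i` variables of each group `i < n` -/
def scaleVar (n : ℕ) (l : ℕ → ℕ) (ξ : ℂ) (v : Va) : Va :=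
  fun i j => if i < n ∧ j < l i then ξ * v i j else v i j

/-- `∂^{(∞;l̄)} F` exists at `v` and equals `Lim` -/
def limInfty (n : ℕ) (l : ℕ → ℕ) (F : Va → ℂ) (v : Va) (Lim : ℂ) : Prop :=
  Tendsto (fun ξ : ℂ => F (scaleVar n l ξ v)) (Bornology.cobounded ℂ) (𝓝 Lim)

/-- `∂^{(0;l̄)} F` exists at `v` and equals `Lim` -/
def limZero (n : ℕ) (l : ℕ → ℕ) (F : Va → ℂ) (v : Va) (Lim : ℂ) : Prop :=
  Tendsto (fun ξ : ℂ => F (scaleVar n l ξ v)) (𝓝[≠] (0 : ℂ)) (𝓝 Lim)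

/-- the degree vector `[a;b]`: `[a;b]_i = #{c ∈ [a,b] : c ≡ i mod n}` -/
def intvCount (n : ℕ) (a b : ℤ) (i : ℕ) : ℕ :=
  ((Finset.Icc a b).filter fun c => c % (n : ℤ) = (i : ℤ)).card

/-- `s` extended `n`-periodically to integer indices -/
def sext (n : ℕ) (s : ℕ → ℂ) (c : ℤ) : ℂ := s (c % (n : ℤ)).toNat

/-- membership in `A(s̄)_{k̄}` -/
def memA (n : ℕ) (q d : ℂ) (s : ℕ → ℂ) (k : ℕ → ℕ) (F : Va → ℂ) : Prop :=
  SK0 n q d k F ∧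
    ∀ a b : ℤ, a ≤ b → (∀ i, i < n → intvCount n a b i ≤ k i) →
      ∀ v ∈ Dom n k, ∃ Li L0 : ℂ,
        limInfty n (intvCount n a b) F v Li ∧ limZero n (intvCount n a b) F v L0 ∧
          Li = (∏ c ∈ Finset.Icc a b, sext n s c) * L0

/-- genericity of the tuple `(s_0, …, s_{n-1})` -/
def Generic (n : ℕ) (q d : ℂ) (s : ℕ → ℂ) : Prop :=
  ∀ α : ℕ → ℤ, (∃ a b : ℤ, (∏ i ∈ Finset.range n, s i ^ α i) = q ^ a * d ^ b) →
    ∀ i j, i < n → j < n → α i = α j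

/-- none of `q`, `qd`, `qd⁻¹` is a root of unity -/
def NoRootsOfUnity (q d : ℂ) : Prop :=
  ∀ m : ℕ, 0 < m → q ^ m ≠ 1 ∧ (q * d) ^ m ≠ 1 ∧ (q * d⁻¹) ^ m ≠ 1

/-- the element `F_k^μ(s̄) ∈ S_{kδ,0}` -/
def Fkmu (n : ℕ) (q : ℂ) (s : ℕ → ℂ) (k : ℕ) (μ : ℂ) : Va → ℂ :=
  fun v =>
    ((∏ i : Fin n, ∏ j : Fin k, ∏ j' : Fin k,
        if j = j' then 1 else v i.1 j.1 - (q ^ 2)⁻¹ * v i.1 j'.1) *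
      ∏ i : Fin n, ((∏ i' ∈ Finset.range (i.1 + 1), s i') * ∏ j : Fin k, v i.1 j.1 -
        μ * ∏ j : Fin k, v (cyc n i.1) j.1)) /
      ∏ i : Fin n, ∏ j : Fin k, ∏ j' : Fin k, (v i.1 j.1 - v (cyc n i.1) j'.1)

/-- iterated star product `F_{k_1}^{μ_1}(s̄) ⋆ ⋯ ⋆ F_{k_r}^{μ_r}(s̄)`, together with its
total degree `k_1 + ⋯ + k_r` -/
def FkmuList (n : ℕ) (q d : ℂ) (s : ℕ → ℂ) : List (ℕ × ℂ) → ℕ × (Va → ℂ)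
  | [] => (0, fun _ => 1)
  | km :: rest =>
      let p := FkmuList n q d s rest
      (km.1 + p.1, starD n q d (fun _ => km.1) (fun _ => p.1) (Fkmu n q s km.1 km.2) p.2)

/-- the element `F_k ∈ S_{kδ,0}` -/
def Fk (n : ℕ) (q : ℂ) (k : ℕ) : Va → ℂ :=
  fun v =>
    ((∏ i : Fin n, ∏ j : Fin k, ∏ j' : Fin k,
        if j = j' then 1 else q⁻¹ * v i.1 j.1 - q * v i.1 j'.1) *
      ∏ i : Fin n, ∏ j : Fin k, v i.1 j.1) /
      ∏ i : Fin n, ∏ j : Fin k, ∏ j' : Fin k, (v (cyc n i.1) j'.1 - v i.1 j.1)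

/-- iterated star product `L_{m_1} ⋆ ⋯ ⋆ L_{m_r}` of elements `L m` of degree `mδ`,
together with its total degree -/
def starList (n : ℕ) (q d : ℂ) (L : ℕ → Va → ℂ) : List ℕ → ℕ × (Va → ℂ)
  | [] => (0, fun _ => 1)
  | m :: rest =>
      let p := starList n q d L rest
      (m + p.1, starD n q d (fun _ => m) (fun _ => p.1) (L m) p.2)





section AuxStmt10

open Bornology

lemma cyc_lt' {n : ℕ} (hn : 0 < n) (i : ℕ) : cyc n i < n := Nat.mod_lt _ hn

lemma cyc_ne' {n : ℕ} (hn : 2 ≤ n) {i : ℕ} (hi : i < n) : cyc n i ≠ i := by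
  unfold cyc
  rcases Nat.lt_or_ge (i + 1) n with h | h
  · rw [Nat.mod_eq_of_lt h]; omega
  · have : i + 1 = n := by omega
    rw [this, Nat.mod_self]; omega

lemma tendsto_div_pow' (a : ℂ) (t : ℕ) :
    Tendsto (fun ξ : ℂ => a / ξ ^ t) (Bornology.cobounded ℂ) (𝓝 (if t = 0 then a else 0)) := by
  rcases Nat.eq_zero_or_pos t with ht | ht
  · simp [ht, tendsto_const_nhds]
  · rw [if_neg ht.ne']
    have h1 : Tendsto (fun ξ : ℂ => a * (ξ⁻¹) ^ t) (Bornology.cobounded ℂ) (𝓝 (a * 0 ^ t)) :=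
      tendsto_const_nhds.mul (Filter.tendsto_inv₀_cobounded.pow t)
    rw [zero_pow ht.ne', mul_zero] at h1
    refine h1.congr fun ξ => ?_
    rw [div_eq_mul_inv, inv_pow]

/-- the limit of `(a ξ^e1 - b ξ^e2)/ξ^(max e1 e2)` as `ξ → ∞` -/
noncomputable def binomLim (a b : ℂ) (e1 e2 : ℕ) : ℂ :=
  (if max e1 e2 - e1 = 0 then a else 0) - (if max e1 e2 - e2 = 0 then b else 0)

lemma tendsto_binom (a b : ℂ) (e1 e2 : ℕ) :
    Tendsto (fun ξ : ℂ => (a * ξ ^ e1 - b * ξ ^ e2) / ξ ^ max e1 e2) (Bornology.cobounded ℂ)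
      (𝓝 (binomLim a b e1 e2)) := by
  have h := (tendsto_div_pow' a (max e1 e2 - e1)).sub (tendsto_div_pow' b (max e1 e2 - e2))
  refine Tendsto.congr' ?_ h
  filter_upwards [Bornology.eventually_ne_cobounded (0 : ℂ)] with ξ hξ
  have key : ∀ (c : ℂ) (e : ℕ), e ≤ max e1 e2 →
      c / ξ ^ (max e1 e2 - e) = c * ξ ^ e / ξ ^ max e1 e2 := by
    intro c e he
    rw [show max e1 e2 = (max e1 e2 - e) + e from (Nat.sub_add_cancel he).symm, pow_add,
      mul_div_mul_right _ _ (pow_ne_zero e hξ), Nat.add_sub_cancel]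
  rw [key a e1 (le_max_left _ _), key b e2 (le_max_right _ _), ← sub_div]

lemma tendsto_prod_div {ι : Type} [Fintype ι] (f : ι → ℂ → ℂ) (df : ι → ℕ) (c : ι → ℂ)
    (h : ∀ i : ι, Tendsto (fun ξ => f i ξ / ξ ^ df i) (Bornology.cobounded ℂ) (𝓝 (c i))) :
    Tendsto (fun ξ : ℂ => (∏ i, f i ξ) / ξ ^ (∑ i, df i)) (Bornology.cobounded ℂ)
      (𝓝 (∏ i, c i)) := by
  have h2 := tendsto_finset_prod (f := fun i ξ => f i ξ / ξ ^ df i) (x := Bornology.cobounded ℂ)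
    (a := c) Finset.univ (fun i _ => h i)
  refine Tendsto.congr' ?_ h2
  filter_upwards [Bornology.eventually_ne_cobounded (0 : ℂ)] with ξ hξ
  rw [Finset.prod_div_distrib, Finset.prod_pow_eq_pow_sum]

lemma sum_cyc {M : Type*} [AddCommMonoid M] (n : ℕ) (g : ℕ → M) :
    ∑ i ∈ Finset.range n, g (cyc n i) = ∑ i ∈ Finset.range n, g i := by
  rcases Nat.eq_zero_or_pos n with hn | hn
  · simp [hn]
  refine Finset.sum_nbij' (fun i => cyc n i) (fun i => (i + (n - 1)) % n) ?_ ?_ ?_ ?_ ?_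
  · intro a _; exact Finset.mem_range.2 (cyc_lt' hn a)
  · intro a _; exact Finset.mem_range.2 (Nat.mod_lt _ hn)
  · intro a ha
    have ha' := Finset.mem_range.1 ha
    show ((a + 1) % n + (n - 1)) % n = a
    rw [Nat.mod_add_mod, show a + 1 + (n - 1) = a + n by omega, Nat.add_mod_right,
      Nat.mod_eq_of_lt ha']
  · intro a ha
    have ha' := Finset.mem_range.1 ha
    show ((a + (n - 1)) % n + 1) % n = a
    rw [Nat.mod_add_mod, show a + (n - 1) + 1 = a + n by omega, Nat.add_mod_right,
      Nat.mod_eq_of_lt ha']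
  · intro a _; rfl

lemma sum_cyc_fin {M : Type*} [AddCommMonoid M] (n : ℕ) (g : ℕ → M) :
    ∑ i : Fin n, g (cyc n i.1) = ∑ i : Fin n, g i.1 := by
  rw [Fin.sum_univ_eq_sum_range (fun i => g (cyc n i)) n, Fin.sum_univ_eq_sum_range g n, sum_cyc]

lemma core_ineq {ι : Type*} (s : Finset ι) (a b : ι → ℤ) (kk : ℤ)
    (h1 : ∑ i ∈ s, b i = ∑ i ∈ s, a i)
    (h2 : ∑ i ∈ s, b i * b i = ∑ i ∈ s, a i * a i) :
    ∑ i ∈ s, (2 * kk * a i - a i * a i - a i + max (a i) (b i)) ≤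
      ∑ i ∈ s, (kk * a i + kk * b i - a i * b i) := by
  have key : ∀ i ∈ s,
      2 * (kk * a i + kk * b i - a i * b i) - 2 * (2 * kk * a i - a i * a i - a i + max (a i) (b i))
        = (2 * kk * (b i - a i) + (a i * a i - b i * b i)) + ((a i - b i)^2 - |a i - b i|)
          + (a i - b i) := by
    intro i _
    rcases le_total (a i) (b i) with h | h
    · rw [max_eq_right h, abs_of_nonpos (by omega)]; ring
    · rw [max_eq_left h, abs_of_nonneg (by omega)]; ring
  have habs : ∀ i ∈ s, (0:ℤ) ≤ (a i - b i)^2 - |a i - b i| := by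
    intro i _
    have hh : |a i - b i| ≤ |a i - b i| ^ 2 := by
      nlinarith [abs_nonneg (a i - b i), sq_abs (a i - b i)]
    rw [← sq_abs]; omega
  have h3 : (0:ℤ) ≤ ∑ i ∈ s, ((a i - b i)^2 - |a i - b i|) := Finset.sum_nonneg habs
  have e1 : ∑ i ∈ s, (2 * kk * (b i - a i) + (a i * a i - b i * b i)) = 0 := by
    rw [Finset.sum_add_distrib]
    have hb : ∑ i ∈ s, 2 * kk * (b i - a i) = 0 := by
      rw [← Finset.mul_sum, Finset.sum_sub_distrib, h1, sub_self, mul_zero]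
    rw [hb, Finset.sum_sub_distrib, h2, sub_self, zero_add]
  have e2 : ∑ i ∈ s, (a i - b i) = 0 := by
    rw [Finset.sum_sub_distrib, h1]; ring
  have expand : ∑ i ∈ s,
      (2 * (kk * a i + kk * b i - a i * b i)
        - 2 * (2 * kk * a i - a i * a i - a i + max (a i) (b i)))
      = ∑ i ∈ s, (((2 * kk * (b i - a i) + (a i * a i - b i * b i)) +
        ((a i - b i)^2 - |a i - b i|)) + (a i - b i)) := Finset.sum_congr rfl key
  rw [Finset.sum_sub_distrib, Finset.sum_add_distrib, Finset.sum_add_distrib, e1, e2] at expand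
  rw [← Finset.mul_sum, ← Finset.mul_sum] at expand
  omega

lemma max01 (x y : ℕ) (hx : x ≤ 1) (hy : y ≤ 1) : max x y + x * y = x + y := by
  interval_cases x <;> interval_cases y <;> simp

lemma sum_max_01 (k : ℕ) (e f : ℕ → ℕ) (he : ∀ j, e j ≤ 1) (hf : ∀ j, f j ≤ 1) :
    (∑ j : Fin k, ∑ j' : Fin k, max (e j.1) (f j'.1)) +
      (∑ j : Fin k, e j.1) * (∑ j' : Fin k, f j'.1)
      = k * (∑ j : Fin k, e j.1) + k * (∑ j' : Fin k, f j'.1) := by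
  have h : ∑ j : Fin k, ∑ j' : Fin k, (max (e j.1) (f j'.1) + e j.1 * f j'.1)
      = ∑ j : Fin k, ∑ j' : Fin k, (e j.1 + f j'.1) := by
    refine Finset.sum_congr rfl fun j _ => Finset.sum_congr rfl fun j' _ => ?_
    exact max01 _ _ (he j.1) (hf j'.1)
  have h1 : ∑ j : Fin k, ∑ j' : Fin k, (max (e j.1) (f j'.1) + e j.1 * f j'.1)
      = (∑ j : Fin k, ∑ j' : Fin k, max (e j.1) (f j'.1)) +
        (∑ j : Fin k, e j.1) * (∑ j' : Fin k, f j'.1) := by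
    rw [Finset.sum_mul_sum]
    rw [← Finset.sum_add_distrib]
    exact Finset.sum_congr rfl fun j _ => by rw [← Finset.sum_add_distrib]
  have h2 : ∑ j : Fin k, ∑ j' : Fin k, (e j.1 + f j'.1)
      = k * (∑ j : Fin k, e j.1) + k * (∑ j' : Fin k, f j'.1) := by
    have hrow : ∀ j : Fin k, ∑ j' : Fin k, (e j.1 + f j'.1)
        = k * e j.1 + ∑ j' : Fin k, f j'.1 := by
      intro j
      rw [Finset.sum_add_distrib, Finset.sum_const, Finset.card_univ, Fintype.card_fin,
        smul_eq_mul]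
    rw [Finset.sum_congr rfl fun j _ => hrow j, Finset.sum_add_distrib, Finset.sum_const,
      Finset.card_univ, Fintype.card_fin, smul_eq_mul, ← Finset.mul_sum]
  rw [← h1, h, h2]

lemma sum_max_diag_01 (k : ℕ) (e : ℕ → ℕ) :
    (∑ j : Fin k, ∑ j' : Fin k, (if j = j' then 0 else max (e j.1) (e j'.1))) +
      (∑ j : Fin k, e j.1)
      = ∑ j : Fin k, ∑ j' : Fin k, max (e j.1) (e j'.1) := by
  rw [← Finset.sum_add_distrib]
  refine Finset.sum_congr rfl fun j _ => ?_
  have h : ∑ j' : Fin k, (if j = j' then (e j.1) else 0) = e j.1 := by simp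
  have hpt : ∀ j' : Fin k, max (e j.1) (e j'.1)
      = (if j = j' then 0 else max (e j.1) (e j'.1)) + (if j = j' then e j.1 else 0) := by
    intro j'
    by_cases hjj : j = j'
    · subst hjj; simp
    · simp [hjj]
  rw [Finset.sum_congr rfl fun j' (_ : j' ∈ Finset.univ) => hpt j', Finset.sum_add_distrib, h]

lemma deg_ineq (n kk : ℕ) (E : ℕ → ℕ → ℕ) (hE : ∀ i j, E i j ≤ 1) :
    (∑ i : Fin n, ∑ j : Fin kk, ∑ j' : Fin kk,
        (if j = j' then 0 else max (E i.1 j.1) (E i.1 j'.1))) +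
      ∑ i : Fin n, max (∑ j : Fin kk, E i.1 j.1) (∑ j : Fin kk, E (cyc n i.1) j.1)
      ≤ ∑ i : Fin n, ∑ j : Fin kk, ∑ j' : Fin kk, max (E i.1 j.1) (E (cyc n i.1) j'.1) := by
  set a : ℕ → ℕ := fun i => ∑ j : Fin kk, E i j.1 with ha
  have hA : ∀ i : ℕ, ((∑ j : Fin kk, ∑ j' : Fin kk,
      (if j = j' then 0 else max (E i j.1) (E i j'.1)) : ℕ) : ℤ)
      = 2 * kk * (a i) - (a i : ℤ) * (a i) - a i := by
    intro i
    have h1 := sum_max_01 kk (E i) (E i) (hE i) (hE i)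
    have h2 := sum_max_diag_01 kk (E i)
    have h1' : ((∑ j : Fin kk, ∑ j' : Fin kk, max (E i j.1) (E i j'.1) : ℕ) : ℤ)
        + (a i : ℤ) * (a i) = kk * (a i) + kk * (a i) := by exact_mod_cast h1
    have h2' : ((∑ j : Fin kk, ∑ j' : Fin kk,
        (if j = j' then 0 else max (E i j.1) (E i j'.1)) : ℕ) : ℤ) + (a i : ℤ)
        = ((∑ j : Fin kk, ∑ j' : Fin kk, max (E i j.1) (E i j'.1) : ℕ) : ℤ) := by
      exact_mod_cast h2
    linarith
  have hC : ∀ i : ℕ, ((∑ j : Fin kk, ∑ j' : Fin kk,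
      max (E i j.1) (E (cyc n i) j'.1) : ℕ) : ℤ)
      = kk * (a i) + kk * (a (cyc n i)) - (a i : ℤ) * (a (cyc n i)) := by
    intro i
    have h1 := sum_max_01 kk (E i) (E (cyc n i)) (hE i) (hE (cyc n i))
    have h1' : ((∑ j : Fin kk, ∑ j' : Fin kk, max (E i j.1) (E (cyc n i) j'.1) : ℕ) : ℤ)
        + (a i : ℤ) * (a (cyc n i)) = kk * (a i) + kk * (a (cyc n i)) := by exact_mod_cast h1
    linarith
  rw [← Nat.cast_le (α := ℤ), Nat.cast_add, Nat.cast_sum, Nat.cast_sum, Nat.cast_sum,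
    ← Finset.sum_add_distrib]
  calc ∑ i : Fin n, (((∑ j : Fin kk, ∑ j' : Fin kk,
          (if j = j' then 0 else max (E i.1 j.1) (E i.1 j'.1)) : ℕ) : ℤ) +
          ((max (a i.1) (a (cyc n i.1)) : ℕ) : ℤ))
      = ∑ i : Fin n, (2 * kk * (a i.1) - (a i.1 : ℤ) * (a i.1) - a i.1 +
          max ((a i.1 : ℕ) : ℤ) ((a (cyc n i.1) : ℕ) : ℤ)) := by
        refine Finset.sum_congr rfl fun i _ => ?_
        rw [hA i.1, Nat.cast_max]
    _ ≤ ∑ i : Fin n, ((kk : ℤ) * (a i.1) + kk * (a (cyc n i.1)) -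
          (a i.1 : ℤ) * (a (cyc n i.1))) := by
        exact core_ineq Finset.univ (fun i : Fin n => (a i.1 : ℤ))
          (fun i : Fin n => (a (cyc n i.1) : ℤ)) kk
          (sum_cyc_fin n (fun i => (a i : ℤ)))
          (sum_cyc_fin n (fun i => (a i : ℤ) * (a i)))
    _ = ∑ i : Fin n, ((∑ j : Fin kk, ∑ j' : Fin kk,
          max (E i.1 j.1) (E (cyc n i.1) j'.1) : ℕ) : ℤ) := by
        refine Finset.sum_congr rfl fun i _ => ?_
        rw [hC i.1]

lemma binomLim_ne (a b : ℂ) (ha : a ≠ 0) (hb : b ≠ 0) (hab : a ≠ b) (e1 e2 : ℕ)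
    (he1 : e1 ≤ 1) (he2 : e2 ≤ 1) : binomLim a b e1 e2 ≠ 0 := by
  unfold binomLim
  interval_cases e1 <;> interval_cases e2 <;>
    simp_all [sub_ne_zero, neg_ne_zero]

lemma div_div_same (x y z : ℂ) (hz : z ≠ 0) : (x / z) / (y / z) = x / y := by
  rw [div_div_div_comm, div_self hz, div_one]

lemma Fkmu_lim (n : ℕ) (hn : 3 ≤ n) (q : ℂ) (s : ℕ → ℂ) (k : ℕ) (μ : ℂ)
    (l : ℕ → ℕ) (v : Va) (hv : v ∈ Dom n (fun _ => k)) :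
    ∃ Lim : ℂ, limInfty n l (Fkmu n q s k μ) v Lim := by
  classical
  have hn0 : 0 < n := by omega
  have hn2 : 2 ≤ n := by omega
  set E : ℕ → ℕ → ℕ := fun i j => if j < l i then 1 else 0 with hEdef
  have hE1 : ∀ i j, E i j ≤ 1 := by
    intro i j; simp only [hEdef]; split <;> omega
  have hw : ∀ (ξ : ℂ) (i j : ℕ), i < n → scaleVar n l ξ v i j = ξ ^ E i j * v i j := by
    intro ξ i j hi
    simp only [scaleVar, hEdef]
    by_cases h : j < l i
    · simp [h, hi]
    · simp [h, hi]
  have hprod : ∀ (ξ : ℂ) (i : ℕ), i < n →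
      ∏ j : Fin k, scaleVar n l ξ v i j.1 = ξ ^ (∑ j : Fin k, E i j.1) * ∏ j : Fin k, v i j.1 := by
    intro ξ i hi
    rw [Finset.prod_congr rfl (fun j (_ : j ∈ Finset.univ) => hw ξ i j.1 hi),
      Finset.prod_mul_distrib, Finset.prod_pow_eq_pow_sum]
  have TA : Tendsto (fun ξ : ℂ =>
      (∏ i : Fin n, ∏ j : Fin k, ∏ j' : Fin k,
        (if j = j' then 1 else
          scaleVar n l ξ v i.1 j.1 - (q ^ 2)⁻¹ * scaleVar n l ξ v i.1 j'.1)) /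
        ξ ^ (∑ i : Fin n, ∑ j : Fin k, ∑ j' : Fin k,
          (if j = j' then 0 else max (E i.1 j.1) (E i.1 j'.1))))
      (Bornology.cobounded ℂ)
      (𝓝 (∏ i : Fin n, ∏ j : Fin k, ∏ j' : Fin k,
        (if j = j' then 1 else
          binomLim (v i.1 j.1) ((q ^ 2)⁻¹ * v i.1 j'.1) (E i.1 j.1) (E i.1 j'.1)))) := by
    apply tendsto_prod_div; intro i
    apply tendsto_prod_div; intro j
    apply tendsto_prod_div; intro j'
    by_cases h : j = j'
    · simp only [if_pos h, pow_zero, div_one]; exact tendsto_const_nhds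
    · simp only [if_neg h]
      refine (tendsto_binom (v i.1 j.1) ((q ^ 2)⁻¹ * v i.1 j'.1)
        (E i.1 j.1) (E i.1 j'.1)).congr fun ξ => ?_
      rw [hw ξ i.1 j.1 i.isLt, hw ξ i.1 j'.1 i.isLt]; ring
  have TB : Tendsto (fun ξ : ℂ =>
      (∏ i : Fin n, ((∏ i' ∈ Finset.range (i.1 + 1), s i') *
          ∏ j : Fin k, scaleVar n l ξ v i.1 j.1 -
          μ * ∏ j : Fin k, scaleVar n l ξ v (cyc n i.1) j.1)) /
        ξ ^ (∑ i : Fin n, max (∑ j : Fin k, E i.1 j.1) (∑ j : Fin k, E (cyc n i.1) j.1)))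
      (Bornology.cobounded ℂ)
      (𝓝 (∏ i : Fin n,
        binomLim ((∏ i' ∈ Finset.range (i.1 + 1), s i') * ∏ j : Fin k, v i.1 j.1)
          (μ * ∏ j : Fin k, v (cyc n i.1) j.1)
          (∑ j : Fin k, E i.1 j.1) (∑ j : Fin k, E (cyc n i.1) j.1))) := by
    apply tendsto_prod_div; intro i
    refine (tendsto_binom _ _ _ _).congr fun ξ => ?_
    rw [hprod ξ i.1 i.isLt, hprod ξ (cyc n i.1) (cyc_lt' hn0 i.1)]; ring
  have TC : Tendsto (fun ξ : ℂ =>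
      (∏ i : Fin n, ∏ j : Fin k, ∏ j' : Fin k,
        (scaleVar n l ξ v i.1 j.1 - scaleVar n l ξ v (cyc n i.1) j'.1)) /
        ξ ^ (∑ i : Fin n, ∑ j : Fin k, ∑ j' : Fin k, max (E i.1 j.1) (E (cyc n i.1) j'.1)))
      (Bornology.cobounded ℂ)
      (𝓝 (∏ i : Fin n, ∏ j : Fin k, ∏ j' : Fin k,
        binomLim (v i.1 j.1) (v (cyc n i.1) j'.1) (E i.1 j.1) (E (cyc n i.1) j'.1))) := by
    apply tendsto_prod_div; intro i
    apply tendsto_prod_div; intro j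
    apply tendsto_prod_div; intro j'
    refine (tendsto_binom _ _ _ _).congr fun ξ => ?_
    rw [hw ξ i.1 j.1 i.isLt, hw ξ (cyc n i.1) j'.1 (cyc_lt' hn0 i.1)]; ring
  have hcC : (∏ i : Fin n, ∏ j : Fin k, ∏ j' : Fin k,
      binomLim (v i.1 j.1) (v (cyc n i.1) j'.1) (E i.1 j.1) (E (cyc n i.1) j'.1)) ≠ 0 := by
    rw [Finset.prod_ne_zero_iff]; intro i _
    rw [Finset.prod_ne_zero_iff]; intro j _
    rw [Finset.prod_ne_zero_iff]; intro j' _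
    refine binomLim_ne _ _ ?_ ?_ ?_ _ _ (hE1 _ _) (hE1 _ _)
    · exact hv.1 i.1 i.isLt j.1 j.isLt
    · exact hv.1 (cyc n i.1) (cyc_lt' hn0 i.1) j'.1 j'.isLt
    · exact hv.2 i.1 (cyc n i.1) j.1 j'.1 i.isLt (cyc_lt' hn0 i.1) j.isLt j'.isLt
        (by
          simp only [ne_eq, Prod.mk.injEq, not_and]
          intro h; exact absurd h.symm (cyc_ne' hn2 i.isLt))
  have hle : (∑ i : Fin n, ∑ j : Fin k, ∑ j' : Fin k,
        (if j = j' then 0 else max (E i.1 j.1) (E i.1 j'.1))) +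
      (∑ i : Fin n, max (∑ j : Fin k, E i.1 j.1) (∑ j : Fin k, E (cyc n i.1) j.1))
      ≤ ∑ i : Fin n, ∑ j : Fin k, ∑ j' : Fin k, max (E i.1 j.1) (E (cyc n i.1) j'.1) :=
    deg_ineq n k E hE1
  set DA := ∑ i : Fin n, ∑ j : Fin k, ∑ j' : Fin k,
    (if j = j' then 0 else max (E i.1 j.1) (E i.1 j'.1)) with hDA
  set DB := ∑ i : Fin n, max (∑ j : Fin k, E i.1 j.1) (∑ j : Fin k, E (cyc n i.1) j.1) with hDB
  set DC := ∑ i : Fin n, ∑ j : Fin k, ∑ j' : Fin k,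
    max (E i.1 j.1) (E (cyc n i.1) j'.1) with hDC
  have TAB := TA.mul TB
  have key := (TAB.mul (tendsto_div_pow' 1 (DC - (DA + DB)))).div TC hcC
  unfold limInfty
  refine ⟨_, Tendsto.congr' ?_ key⟩
  filter_upwards [Bornology.eventually_ne_cobounded (0 : ℂ)] with ξ hξ
  simp only [Pi.div_apply]
  rw [div_mul_div_comm, div_mul_div_comm, mul_one, ← pow_add, ← pow_add,
    Nat.add_sub_cancel' hle]
  exact div_div_same _ _ _ (pow_ne_zero DC hξ)

lemma Fkmu_dep (n : ℕ) (hn0 : 0 < n) (q : ℂ) (s : ℕ → ℂ) (k : ℕ) (μ : ℂ) :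
    VaDependsOn n (fun _ => k) (Fkmu n q s k μ) := by
  intro v w h
  have h1 : ∀ (i : Fin n) (j : Fin k), v i.1 j.1 = w i.1 j.1 :=
    fun i j => h i.1 i.isLt j.1 j.isLt
  have h2 : ∀ (i : Fin n) (j : Fin k), v (cyc n i.1) j.1 = w (cyc n i.1) j.1 :=
    fun i j => h _ (cyc_lt' hn0 i.1) j.1 j.isLt
  unfold Fkmu
  simp only [h1, h2]

lemma Fkmu_symm (n : ℕ) (q : ℂ) (s : ℕ → ℂ) (k : ℕ) (μ : ℂ) :
    SymmIn n (fun _ => k) (Fkmu n q s k μ) := by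
  classical
  intro v i₀ _ σ hσ
  have hlt : ∀ j, j < k → σ j < k := by
    intro j hj
    by_contra h
    push_neg at h
    have h2 := σ.injective (hσ _ h)
    omega
  have hlt' : ∀ j, j < k → σ⁻¹ j < k := by
    intro j hj
    by_contra h
    push_neg at h
    have h2 := hσ _ h
    rw [show σ (σ⁻¹ j) = j from σ.apply_symm_apply j] at h2
    omega
  let σ' : Equiv.Perm (Fin k) :=
    { toFun := fun j => ⟨σ j.1, hlt j.1 j.isLt⟩
      invFun := fun j => ⟨σ⁻¹ j.1, hlt' j.1 j.isLt⟩
      left_inv := fun j => by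
        ext
        simp [Equiv.Perm.coe_inv, Equiv.symm_apply_apply]
      right_inv := fun j => by
        ext
        simp [Equiv.Perm.coe_inv, Equiv.apply_symm_apply] }
  set v' : Va := fun i j => if i = i₀ then v i (σ j) else v i j with hv'
  have hsingle : ∀ (m : ℕ) (f : ℂ → ℂ),
      (∏ j : Fin k, f (v' m j.1)) = ∏ j : Fin k, f (v m j.1) := by
    intro m f
    by_cases hm : m = i₀
    · calc (∏ j : Fin k, f (v' m j.1)) = ∏ j : Fin k, f (v m ((σ' j).1)) := by
            refine Finset.prod_congr rfl fun j _ => ?_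
            simp only [hv', if_pos hm]
            rfl
        _ = _ := Equiv.prod_comp σ' (fun j => f (v m j.1))
    · refine Finset.prod_congr rfl fun j _ => ?_
      simp only [hv', if_neg hm]
  have hgroup : ∀ m, (∏ j : Fin k, v' m j.1) = ∏ j : Fin k, v m j.1 :=
    fun m => hsingle m id
  have hA : ∀ m : ℕ,
      (∏ j : Fin k, ∏ j' : Fin k, if j = j' then 1 else v' m j.1 - (q^2)⁻¹ * v' m j'.1)
      = ∏ j : Fin k, ∏ j' : Fin k, if j = j' then 1 else v m j.1 - (q^2)⁻¹ * v m j'.1 := by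
    intro m
    by_cases hm : m = i₀
    · have step1 : (∏ j : Fin k, ∏ j' : Fin k,
          if j = j' then (1:ℂ) else v' m j.1 - (q^2)⁻¹ * v' m j'.1)
          = ∏ j : Fin k, ∏ j' : Fin k, (if σ' j = σ' j' then (1:ℂ)
              else v m ((σ' j).1) - (q^2)⁻¹ * v m ((σ' j').1)) := by
        refine Finset.prod_congr rfl fun j _ => Finset.prod_congr rfl fun j' _ => ?_
        simp only [hv', if_pos hm]
        exact if_congr (Equiv.apply_eq_iff_eq σ').symm rfl rfl
      rw [step1]
      have step2 : ∀ j : Fin k, (∏ j' : Fin k, (if σ' j = σ' j' then (1:ℂ)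
            else v m ((σ' j).1) - (q^2)⁻¹ * v m ((σ' j').1)))
          = ∏ j' : Fin k, (if σ' j = j' then (1:ℂ)
            else v m ((σ' j).1) - (q^2)⁻¹ * v m j'.1) :=
        fun j => Equiv.prod_comp σ'
          (fun j' => if σ' j = j' then (1:ℂ) else v m ((σ' j).1) - (q^2)⁻¹ * v m j'.1)
      rw [Finset.prod_congr rfl fun j (_ : j ∈ Finset.univ) => step2 j]
      exact Equiv.prod_comp σ'
        (fun jj => ∏ j' : Fin k, (if jj = j' then (1:ℂ) else v m jj.1 - (q^2)⁻¹ * v m j'.1))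
    · refine Finset.prod_congr rfl fun j _ => Finset.prod_congr rfl fun j' _ => ?_
      simp only [hv', if_neg hm]
  have hC : ∀ (m m' : ℕ), (∏ j : Fin k, ∏ j' : Fin k, (v' m j.1 - v' m' j'.1))
      = ∏ j : Fin k, ∏ j' : Fin k, (v m j.1 - v m' j'.1) := by
    intro m m'
    have inner : ∀ x : ℂ, (∏ j' : Fin k, (x - v' m' j'.1)) = ∏ j' : Fin k, (x - v m' j'.1) :=
      fun x => hsingle m' (fun y => x - y)
    calc ∏ j : Fin k, ∏ j' : Fin k, (v' m j.1 - v' m' j'.1)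
        = ∏ j : Fin k, (fun x => ∏ j' : Fin k, (x - v m' j'.1)) (v' m j.1) :=
          Finset.prod_congr rfl fun j _ => inner _
      _ = ∏ j : Fin k, (fun x => ∏ j' : Fin k, (x - v m' j'.1)) (v m j.1) :=
          hsingle m (fun x => ∏ j' : Fin k, (x - v m' j'.1))
      _ = _ := rfl
  show Fkmu n q s k μ v' = Fkmu n q s k μ v
  unfold Fkmu
  congr 1
  · congr 1
    · exact Finset.prod_congr rfl fun i _ => hA i.1
    · exact Finset.prod_congr rfl fun i _ => by rw [hgroup i.1, hgroup (cyc n i.1)]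
  · exact Finset.prod_congr rfl fun i _ => hC i.1 (cyc n i.1)

lemma Fkmu_pole (n : ℕ) (hn : 3 ≤ n) (q : ℂ) (s : ℕ → ℂ) (k : ℕ) (μ : ℂ) :
    PoleCond n (fun _ => k) (Fkmu n q s k μ) := by
  classical
  have hn0 : 0 < n := by omega
  have hn2 : 2 ≤ n := by omega
  refine ⟨(∏ i : Fin n, ∏ j : Fin k, ∏ j' : Fin k,
      if j = j' then 1 else (MvPolynomial.X (i.1, j.1) -
        MvPolynomial.C ((q^2)⁻¹) * MvPolynomial.X (i.1, j'.1))) *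
    ∏ i : Fin n, (MvPolynomial.C (∏ i' ∈ Finset.range (i.1+1), s i') *
      ∏ j : Fin k, MvPolynomial.X (i.1, j.1) -
      MvPolynomial.C μ * ∏ j : Fin k, MvPolynomial.X (cyc n i.1, j.1)), 0, ?_⟩
  intro v hv
  have hNC : (∏ i : Fin n, ∏ j : Fin k, ∏ j' : Fin k,
      (v i.1 j.1 - v (cyc n i.1) j'.1)) ≠ 0 := by
    rw [Finset.prod_ne_zero_iff]; intro i _
    rw [Finset.prod_ne_zero_iff]; intro j _
    rw [Finset.prod_ne_zero_iff]; intro j' _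
    refine sub_ne_zero.mpr (hv.2 i.1 (cyc n i.1) j.1 j'.1 i.isLt (cyc_lt' hn0 i.1)
      j.isLt j'.isLt ?_)
    simp only [ne_eq, Prod.mk.injEq, not_and]
    intro h; exact absurd h.symm (cyc_ne' hn2 i.isLt)
  rw [pow_zero, mul_one]
  have hmain : Fkmu n q s k μ v * poleDenom n (fun _ => k) v
      = (∏ i : Fin n, ∏ j : Fin k, ∏ j' : Fin k,
          if j = j' then 1 else v i.1 j.1 - (q ^ 2)⁻¹ * v i.1 j'.1) *
        ∏ i : Fin n, ((∏ i' ∈ Finset.range (i.1 + 1), s i') * ∏ j : Fin k, v i.1 j.1 -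
          μ * ∏ j : Fin k, v (cyc n i.1) j.1) := by
    show _ / (∏ i : Fin n, ∏ j : Fin k, ∏ j' : Fin k, (v i.1 j.1 - v (cyc n i.1) j'.1)) *
      (∏ i : Fin n, ∏ j : Fin k, ∏ j' : Fin k, (v i.1 j.1 - v (cyc n i.1) j'.1)) = _
    exact div_mul_cancel₀ _ hNC
  rw [hmain]
  simp only [map_mul, MvPolynomial.eval_prod, map_sub, map_one,
    MvPolynomial.eval_C, MvPolynomial.eval_X,
    apply_ite (MvPolynomial.eval (fun p : ℕ × ℕ => v p.1 p.2))]

lemma Fkmu_wheel (n : ℕ) (hn : 3 ≤ n) (q d : ℂ) (hq : q ≠ 0) (hd : d ≠ 0)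
    (hroot : NoRootsOfUnity q d) (s : ℕ → ℂ) (k : ℕ) (μ : ℂ) :
    WheelCond n q d (fun _ => k) (Fkmu n q s k μ) := by
  classical
  have hq2 : q ^ 2 ≠ 1 := (hroot 2 (by norm_num)).1
  have main : ∀ v ∈ Dom n (fun _ => k), ∀ i, i < n → ∀ j₁ j₂, j₁ < k → j₂ < k →
      v i j₁ = q ^ 2 * v i j₂ → Fkmu n q s k μ v = 0 := by
    intro v hv i hi j₁ j₂ hj₁ hj₂ hrel
    have hne : j₁ ≠ j₂ := by
      intro he
      subst he
      have hv0 := hv.1 i hi j₁ hj₁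
      apply hq2
      have h2 : q ^ 2 * v i j₁ = 1 * v i j₁ := by rw [← hrel, one_mul]
      exact mul_left_injective₀ hv0 h2
    unfold Fkmu
    have hNA : (∏ i' : Fin n, ∏ j : Fin k, ∏ j' : Fin k,
        if j = j' then (1:ℂ) else v i'.1 j.1 - (q ^ 2)⁻¹ * v i'.1 j'.1) = 0 := by
      apply Finset.prod_eq_zero (Finset.mem_univ (⟨i, hi⟩ : Fin n))
      apply Finset.prod_eq_zero (Finset.mem_univ (⟨j₂, hj₂⟩ : Fin k))
      apply Finset.prod_eq_zero (Finset.mem_univ (⟨j₁, hj₁⟩ : Fin k))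
      rw [if_neg (by simp only [ne_eq, Fin.mk.injEq]; exact Ne.symm hne)]
      rw [sub_eq_zero, hrel, inv_mul_cancel_left₀ (pow_ne_zero 2 hq)]
    rw [hNA, zero_mul, zero_div]
  intro v hv i hi
  constructor
  · intro j₁ j₂ lw hj₁ hj₂ _ h1 h2
    refine main v hv i hi j₁ j₂ hj₁ hj₂ ?_
    have hcalc : q * d * (q * d⁻¹ * v i j₂) = (d * d⁻¹) * (q ^ 2 * v i j₂) := by ring
    rw [h1, h2, hcalc, mul_inv_cancel₀ hd, one_mul]
  · intro j₁ j₂ lw hj₁ hj₂ _ h1 h2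
    refine main v hv i hi j₁ j₂ hj₁ hj₂ ?_
    have hcalc : q * d⁻¹ * (q * d * v i j₂) = (d * d⁻¹) * (q ^ 2 * v i j₂) := by ring
    rw [h1, h2, hcalc, mul_inv_cancel₀ hd, one_mul]

lemma Fkmu_deg0 (n : ℕ) (q : ℂ) (s : ℕ → ℂ) (k : ℕ) (μ : ℂ) :
    Deg0 n (fun _ => k) (Fkmu n q s k μ) := by
  classical
  intro v _ ξ hξ
  unfold Fkmu
  have hscale : ∀ m : ℕ, ∏ j : Fin k, ξ * v m j.1 = ξ ^ k * ∏ j : Fin k, v m j.1 := by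
    intro m
    rw [Finset.prod_mul_distrib, Finset.prod_const, Finset.card_univ, Fintype.card_fin]
  have hNA : (∏ i : Fin n, ∏ j : Fin k, ∏ j' : Fin k,
      if j = j' then (1:ℂ) else ξ * v i.1 j.1 - (q ^ 2)⁻¹ * (ξ * v i.1 j'.1))
      = (∏ i : Fin n, ∏ j : Fin k, ∏ j' : Fin k, if j = j' then (1:ℂ) else ξ) *
        ∏ i : Fin n, ∏ j : Fin k, ∏ j' : Fin k,
          (if j = j' then (1:ℂ) else v i.1 j.1 - (q ^ 2)⁻¹ * v i.1 j'.1) := by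
    rw [← Finset.prod_mul_distrib]
    refine Finset.prod_congr rfl fun i _ => ?_
    rw [← Finset.prod_mul_distrib]
    refine Finset.prod_congr rfl fun j _ => ?_
    rw [← Finset.prod_mul_distrib]
    refine Finset.prod_congr rfl fun j' _ => ?_
    by_cases h : j = j'
    · simp [h]
    · simp only [if_neg h]; ring
  have hNB : (∏ i : Fin n, ((∏ i' ∈ Finset.range (i.1 + 1), s i') *
        ∏ j : Fin k, (ξ * v i.1 j.1) - μ * ∏ j : Fin k, (ξ * v (cyc n i.1) j.1)))
      = (∏ _i : Fin n, ξ ^ k) *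
        ∏ i : Fin n, ((∏ i' ∈ Finset.range (i.1 + 1), s i') * ∏ j : Fin k, v i.1 j.1 -
          μ * ∏ j : Fin k, v (cyc n i.1) j.1) := by
    rw [← Finset.prod_mul_distrib]
    refine Finset.prod_congr rfl fun i _ => ?_
    rw [hscale i.1, hscale (cyc n i.1)]
    ring
  have hNC : (∏ i : Fin n, ∏ j : Fin k, ∏ j' : Fin k,
      (ξ * v i.1 j.1 - ξ * v (cyc n i.1) j'.1))
      = (∏ _i : Fin n, ∏ _j : Fin k, ∏ _j' : Fin k, ξ) *
        ∏ i : Fin n, ∏ j : Fin k, ∏ j' : Fin k, (v i.1 j.1 - v (cyc n i.1) j'.1) := by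
    rw [← Finset.prod_mul_distrib]
    refine Finset.prod_congr rfl fun i _ => ?_
    rw [← Finset.prod_mul_distrib]
    refine Finset.prod_congr rfl fun j _ => ?_
    rw [← Finset.prod_mul_distrib]
    refine Finset.prod_congr rfl fun j' _ => ?_
    ring
  have hW : (∏ i : Fin n, ∏ j : Fin k, ∏ j' : Fin k, if j = j' then (1:ℂ) else ξ) *
      (∏ _i : Fin n, ξ ^ k) = ∏ _i : Fin n, ∏ _j : Fin k, ∏ _j' : Fin k, ξ := by
    rw [← Finset.prod_mul_distrib]
    refine Finset.prod_congr rfl fun i _ => ?_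
    have hdiag : (∏ j : Fin k, ∏ j' : Fin k, if j = j' then ξ else (1:ℂ)) = ξ ^ k := by
      have : ∀ j : Fin k, (∏ j' : Fin k, if j = j' then ξ else (1:ℂ)) = ξ := by
        intro j; simp
      rw [Finset.prod_congr rfl fun j (_ : j ∈ Finset.univ) => this j, Finset.prod_const,
        Finset.card_univ, Fintype.card_fin]
    rw [← hdiag, ← Finset.prod_mul_distrib]
    refine Finset.prod_congr rfl fun j _ => ?_
    rw [← Finset.prod_mul_distrib]
    refine Finset.prod_congr rfl fun j' _ => ?_
    by_cases h : j = j'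
    · simp [h]
    · simp [h]
  have hZ : (∏ _i : Fin n, ∏ _j : Fin k, ∏ _j' : Fin k, ξ) ≠ 0 := by
    rw [Finset.prod_ne_zero_iff]; intro i _
    rw [Finset.prod_ne_zero_iff]; intro j _
    rw [Finset.prod_ne_zero_iff]; intro j' _
    exact hξ
  show _ = _
  simp only []
  rw [hNA, hNB, hNC]
  rw [show ((∏ i : Fin n, ∏ j : Fin k, ∏ j' : Fin k, if j = j' then (1:ℂ) else ξ) *
      (∏ i : Fin n, ∏ j : Fin k, ∏ j' : Fin k,
        (if j = j' then (1:ℂ) else v i.1 j.1 - (q ^ 2)⁻¹ * v i.1 j'.1))) *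
      ((∏ _i : Fin n, ξ ^ k) *
        ∏ i : Fin n, ((∏ i' ∈ Finset.range (i.1 + 1), s i') * ∏ j : Fin k, v i.1 j.1 -
          μ * ∏ j : Fin k, v (cyc n i.1) j.1))
      = ((∏ i : Fin n, ∏ j : Fin k, ∏ j' : Fin k, if j = j' then (1:ℂ) else ξ) *
          (∏ _i : Fin n, ξ ^ k)) *
        ((∏ i : Fin n, ∏ j : Fin k, ∏ j' : Fin k,
          (if j = j' then (1:ℂ) else v i.1 j.1 - (q ^ 2)⁻¹ * v i.1 j'.1)) *
         ∏ i : Fin n, ((∏ i' ∈ Finset.range (i.1 + 1), s i') * ∏ j : Fin k, v i.1 j.1 -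
          μ * ∏ j : Fin k, v (cyc n i.1) j.1)) from by ring, hW]
  exact mul_div_mul_left _ _ hZ

lemma Fkmu_SK0 (n : ℕ) (hn : 3 ≤ n) (q d : ℂ) (hq : q ≠ 0) (hd : d ≠ 0)
    (hroot : NoRootsOfUnity q d) (s : ℕ → ℂ)
    (k : ℕ) (μ : ℂ) : SK0 n q d (fun _ => k) (Fkmu n q s k μ) :=
  ⟨⟨Fkmu_dep n (by omega) q s k μ, Fkmu_symm n q s k μ, Fkmu_pole n hn q s k μ,
    Fkmu_wheel n hn q d hq hd hroot s k μ⟩, Fkmu_deg0 n q s k μ⟩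

end AuxStmt10

theorem stmt10 (n : ℕ) (hn : 3 ≤ n) (q d : ℂ) (hq : q ≠ 0) (hd : d ≠ 0)
    (hroot : NoRootsOfUnity q d) (s : ℕ → ℂ) (hs : ∀ i, i < n → s i ≠ 0)
    (k : ℕ) (hk : 1 ≤ k) (μ : ℂ) :
    SK0 n q d (fun _ => k) (Fkmu n q s k μ) ∧
      ∀ l : ℕ → ℕ, (∀ i, i < n → l i ≤ k) →
        ∀ v ∈ Dom n (fun _ => k), ∃ Lim : ℂ, limInfty n l (Fkmu n q s k μ) v Lim := ⟨Fkmu_SK0 n hn q d hq hd hroot s k μ,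
  fun l _ v hv => Fkmu_lim n hn q s k μ l v hv⟩
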